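/- arXiv:1409.1518 — 5 statements merged into one kernel-verified Lean document; each statement's English description precedes it below -/
import Mathlib

section
/- Let p > 1, Λ₁, Λ₂ > 0, a₀ ≥ 0, and let A : ℝ^N → ℝ^N be continuous with A(ξ)·ξ ≥ Λ₁|ξ|^p and |A(ξ)| ≤ a₀ + Λ₂|ξ|^{p−1} for all ξ ∈ ℝ^N, and (A(ξ) − A(ζ))·(ξ − ζ) > 0 whenever ξ ≠ ζ. If {ξ_n}, {ζ_n} are sequences in ℝ^N such that ζ_n → ζ and (A(ξ_n) − A(ζ_n))·(ξ_n − ζ_n) → 0, then ξ_n → ζ. -/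
open Filter Topology
open scoped RealInnerProductSpace

/-- Let `A : ℝ^N → ℝ^N` be continuous, satisfying the Leray--Lions
coercivity `A(ξ)·ξ ≥ Λ₁|ξ|^p`, growth `|A(ξ)| ≤ a₀ + Λ₂|ξ|^{p-1}` and strict monotonicity
`(A(ξ) - A(ζ))·(ξ - ζ) > 0` for `ξ ≠ ζ`. If `ζₙ → ζ` and
`(A(ξₙ) - A(ζₙ))·(ξₙ - ζₙ) → 0`, then `ξₙ → ζ`. -/
theorem stmt4 (N : ℕ) (p Λ₁ Λ₂ a₀ : ℝ) (hp : 1 < p) (hΛ₁ : 0 < Λ₁) (hΛ₂ : 0 < Λ₂)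
    (ha₀ : 0 ≤ a₀)
    (A : EuclideanSpace ℝ (Fin N) → EuclideanSpace ℝ (Fin N)) (hAcont : Continuous A)
    (hcoer : ∀ ξ, Λ₁ * ‖ξ‖ ^ p ≤ ⟪A ξ, ξ⟫)
    (hgrowth : ∀ ξ, ‖A ξ‖ ≤ a₀ + Λ₂ * ‖ξ‖ ^ (p - 1))
    (hmono : ∀ ξ ζ, ξ ≠ ζ → 0 < ⟪A ξ - A ζ, ξ - ζ⟫)
    (ξ ζseq : ℕ → EuclideanSpace ℝ (Fin N)) (ζ : EuclideanSpace ℝ (Fin N))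
    (hζ : Tendsto ζseq atTop (𝓝 ζ))
    (hconv : Tendsto (fun n => ⟪A (ξ n) - A (ζseq n), ξ n - ζseq n⟫) atTop (𝓝 0)) :
    Tendsto ξ atTop (𝓝 ζ) := by
  have hp0 : (0:ℝ) < p := lt_trans one_pos hp
  have hp1 : (0:ℝ) < p - 1 := by linarith
  -- a bound on ζseq
  obtain ⟨C₀, hC₀⟩ := (hζ.norm).bddAbove_range
  set C : ℝ := max C₀ 0 with hCdef
  have hC0 : 0 ≤ C := le_max_right _ _
  have hC : ∀ n, ‖ζseq n‖ ≤ C := fun n =>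
    le_trans (hC₀ ⟨n, rfl⟩) (le_max_left _ _)
  -- a bound on the pairing
  obtain ⟨M₀, hM₀⟩ := hconv.bddAbove_range
  set M : ℝ := max M₀ 0 with hMdef
  have hM0 : 0 ≤ M := le_max_right _ _
  have hM : ∀ n, ⟪A (ξ n) - A (ζseq n), ξ n - ζseq n⟫ ≤ M := fun n =>
    le_trans (hM₀ ⟨n, rfl⟩) (le_max_left _ _)
  set D : ℝ := a₀ + Λ₂ * C ^ (p - 1) with hDdef
  have hD0 : 0 ≤ D := by positivity
  set K : ℝ := M + a₀ * C + D * C with hKdef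
  have hK0 : 0 ≤ K := by positivity
  -- key inequality
  have key : ∀ n, Λ₁ * ‖ξ n‖ ^ p ≤ K + Λ₂ * C * ‖ξ n‖ ^ (p - 1) + D * ‖ξ n‖ := by
    intro n
    set t : ℝ := ‖ξ n‖ with htdef
    have ht0 : 0 ≤ t := norm_nonneg _
    have hAζ : ‖A (ζseq n)‖ ≤ D := by
      refine le_trans (hgrowth (ζseq n)) ?_
      have := Real.rpow_le_rpow (norm_nonneg (ζseq n)) (hC n) hp1.le
      rw [hDdef]
      nlinarith [hΛ₂.le]
    have h1 : Λ₁ * t ^ p ≤ ⟪A (ξ n), ξ n⟫ := hcoer (ξ n)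
    have h2 : ⟪A (ζseq n), ζseq n⟫ ≥ 0 := by
      refine le_trans ?_ (hcoer (ζseq n))
      positivity
    have h3 : ⟪A (ξ n), ζseq n⟫ ≤ (a₀ + Λ₂ * t ^ (p - 1)) * C := by
      refine le_trans (real_inner_le_norm _ _) ?_
      have h4 : (0:ℝ) ≤ a₀ + Λ₂ * t ^ (p - 1) := by positivity
      exact mul_le_mul (hgrowth (ξ n)) (hC n) (norm_nonneg _) h4
    have h5 : ⟪A (ζseq n), ξ n⟫ ≤ D * t := by
      refine le_trans (real_inner_le_norm _ _) ?_
      exact mul_le_mul_of_nonneg_right hAζ ht0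
    have hexp : ⟪A (ξ n) - A (ζseq n), ξ n - ζseq n⟫ =
        ⟪A (ξ n), ξ n⟫ - ⟪A (ξ n), ζseq n⟫ - ⟪A (ζseq n), ξ n⟫ + ⟪A (ζseq n), ζseq n⟫ := by
      simp [inner_sub_left, inner_sub_right]; ring
    have hMn := hM n
    rw [hexp] at hMn
    have : ⟪A (ξ n), ξ n⟫ ≤ M + (a₀ + Λ₂ * t ^ (p - 1)) * C + D * t := by linarith
    rw [hKdef]; nlinarith
  -- choose threshold T
  set T : ℝ := max 1 (max (4 * Λ₂ * C / Λ₁) ((4 * D / Λ₁) ^ (1 / (p - 1)))) with hTdef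
  have hT1 : (1:ℝ) ≤ T := le_max_left _ _
  have hT0 : (0:ℝ) < T := lt_of_lt_of_le one_pos hT1
  have hT2 : Λ₂ * C ≤ Λ₁ / 4 * T := by
    have h' : 4 * Λ₂ * C / Λ₁ ≤ T :=
      le_trans (le_max_left (4 * Λ₂ * C / Λ₁) ((4 * D / Λ₁) ^ (1 / (p - 1))))
        (le_max_right 1 _)
    rw [div_le_iff₀ hΛ₁] at h'
    nlinarith
  have hT3 : D ≤ Λ₁ / 4 * T ^ (p - 1) := by
    have h : (4 * D / Λ₁) ^ (1 / (p - 1)) ≤ T :=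
      le_trans (le_max_right (4 * Λ₂ * C / Λ₁) _) (le_max_right 1 _)
    have hbase : (0:ℝ) ≤ 4 * D / Λ₁ := by positivity
    have h2 := Real.rpow_le_rpow (Real.rpow_nonneg hbase _) h hp1.le
    rw [← Real.rpow_mul hbase, one_div, inv_mul_cancel₀ hp1.ne', Real.rpow_one] at h2
    rw [div_le_iff₀ hΛ₁] at h2
    nlinarith [Real.rpow_nonneg hT0.le (p - 1)]
  -- uniform bound on ξ
  set R : ℝ := max T ((2 * K / Λ₁) ^ (1 / p)) with hRdef
  have hbound : ∀ n, ‖ξ n‖ ≤ R := by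
    intro n
    set t : ℝ := ‖ξ n‖ with htdef
    rcases le_or_gt t T with h | h
    · exact le_trans h (le_max_left _ _)
    · have ht0 : (0:ℝ) < t := lt_trans hT0 h
      have htp : t ^ (p - 1) * t = t ^ p := by
        have h' := Real.rpow_add ht0 (p - 1) 1
        rw [Real.rpow_one] at h'
        rw [← h']
        norm_num
      have hA : Λ₂ * C * t ^ (p - 1) ≤ Λ₁ / 4 * t ^ p := by
        have h1 : Λ₂ * C * t ^ (p - 1) ≤ (Λ₁ / 4 * T) * t ^ (p - 1) :=
          mul_le_mul_of_nonneg_right hT2 (Real.rpow_nonneg ht0.le _)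
        have h2 : (Λ₁ / 4 * T) * t ^ (p - 1) ≤ (Λ₁ / 4 * t) * t ^ (p - 1) := by
          refine mul_le_mul_of_nonneg_right ?_ (Real.rpow_nonneg ht0.le _)
          nlinarith [h.le]
        calc Λ₂ * C * t ^ (p - 1) ≤ (Λ₁ / 4 * t) * t ^ (p - 1) := le_trans h1 h2
          _ = Λ₁ / 4 * t ^ p := by rw [← htp]; ring
      have hB : D * t ≤ Λ₁ / 4 * t ^ p := by
        have hTt : T ^ (p - 1) ≤ t ^ (p - 1) :=
          Real.rpow_le_rpow hT0.le h.le hp1.le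
        have h1 : D * t ≤ (Λ₁ / 4 * t ^ (p - 1)) * t := by
          have h2 : Λ₁ / 4 * T ^ (p - 1) ≤ Λ₁ / 4 * t ^ (p - 1) :=
            mul_le_mul_of_nonneg_left hTt (by positivity)
          exact mul_le_mul_of_nonneg_right (le_trans hT3 h2) ht0.le
        calc D * t ≤ (Λ₁ / 4 * t ^ (p - 1)) * t := h1
          _ = Λ₁ / 4 * t ^ p := by rw [← htp]; ring
      have hkey := key n
      have htpK : t ^ p ≤ 2 * K / Λ₁ := by
        rw [le_div_iff₀ hΛ₁]
        nlinarith
      have : t = (t ^ p) ^ (1 / p) := by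
        rw [← Real.rpow_mul ht0.le, mul_one_div, div_self hp0.ne', Real.rpow_one]
      rw [this]
      refine le_trans (Real.rpow_le_rpow (Real.rpow_nonneg ht0.le _) htpK (by positivity)) ?_
      exact le_max_right _ _
  -- subsequence argument
  apply Filter.tendsto_of_subseq_tendsto
  intro ns hns
  have hmem : ∀ k, ξ (ns k) ∈ Metric.closedBall (0 : EuclideanSpace ℝ (Fin N)) R := by
    intro k
    simpa [Metric.mem_closedBall, dist_zero_right] using hbound (ns k)
  obtain ⟨a, -, φ, hφ, ha⟩ :=
    tendsto_subseq_of_bounded Metric.isBounded_closedBall hmem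
  refine ⟨φ, ?_⟩
  have hξφ : Tendsto (fun k => ξ (ns (φ k))) atTop (𝓝 a) := ha
  have hζφ : Tendsto (fun k => ζseq (ns (φ k))) atTop (𝓝 ζ) :=
    hζ.comp (hns.comp hφ.tendsto_atTop)
  have hA1 : Tendsto (fun k => ⟪A (ξ (ns (φ k))) - A (ζseq (ns (φ k))),
      ξ (ns (φ k)) - ζseq (ns (φ k))⟫) atTop (𝓝 ⟪A a - A ζ, a - ζ⟫) :=
    ((((hAcont.tendsto a).comp hξφ).sub ((hAcont.tendsto ζ).comp hζφ)).inner
      (hξφ.sub hζφ))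
  have hA0 : Tendsto (fun k => ⟪A (ξ (ns (φ k))) - A (ζseq (ns (φ k))),
      ξ (ns (φ k)) - ζseq (ns (φ k))⟫) atTop (𝓝 0) :=
    hconv.comp (hns.comp hφ.tendsto_atTop)
  have hzero : ⟪A a - A ζ, a - ζ⟫ = 0 := tendsto_nhds_unique hA1 hA0
  have haζ : a = ζ := by
    by_contra hne
    exact (hmono a ζ hne).ne' hzero
  rw [haζ] at hξφ
  exact hξφ
end

section
/- Let k, ℓ > 0 with ℓ > 2k. Define T_k(r) = max{min{r, k}, −k}, T̄_k(r) = ∫₀^r T_k(τ) dτ, J(r) = T_{ℓ−k}(r − T_k(r)) and J̄(r) = ∫₀^r J(τ) dτ. Then for all r, s ∈ ℝ with |s| ≤ k, one has T̄_{ℓ+k}(r − s) − J̄(r) ≥ 0. -/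
open MeasureTheory

/-- The truncation at level `k`: `T_k(r) = max (min r k) (-k)`. -/
noncomputable def Tk (k r : ℝ) : ℝ := max (min r k) (-k)

/-- The primitive `T̄_k(r) = ∫₀^r T_k(τ) dτ`. -/
noncomputable def Tkbar (k r : ℝ) : ℝ := ∫ τ in (0:ℝ)..r, Tk k τ

/-- `J(r) = T_{ℓ-k}(r - T_k(r))`. -/
noncomputable def Jfun (k ℓ r : ℝ) : ℝ := Tk (ℓ - k) (r - Tk k r)

/-- `J̄(r) = ∫₀^r J(τ) dτ`. -/
noncomputable def Jbar (k ℓ r : ℝ) : ℝ := ∫ τ in (0:ℝ)..r, Jfun k ℓ τ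

/-! The primitive `J̄` is itself a truncated primitive evaluated at the shrinkage:
`J̄(r) = T̄_{ℓ-k}(r - T_k r)`, because `J` vanishes on `[-k, k]` and is `T_{ℓ-k}` shifted by `±k`
outside. As `T̄_m(x)` is even and nondecreasing both in `|x|` and in the level `m ≥ 0`, and
`|r - T_k r| = (|r| - k)⁺ ≤ |r - s|`, we get `J̄(r) ≤ T̄_{ℓ+k}(r - s)`. -/

open Set intervalIntegral

theorem intervalIntegral.integral_zero_neg_of_odd {E : Type*} [NormedAddCommGroup E]
    [NormedSpace ℝ E] {f : ℝ → E} (hf : Function.Odd f) (x : ℝ) :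
    ∫ τ in (0:ℝ)..-x, f τ = ∫ τ in (0:ℝ)..x, f τ :=
  calc ∫ τ in (0:ℝ)..-x, f τ = ∫ τ in (0:ℝ)..-x, -f (-τ) :=
      integral_congr fun τ _ => by rw [hf τ, neg_neg]
    _ = ∫ τ in (0:ℝ)..x, f τ := by
      rw [integral_neg, integral_comp_neg, neg_neg, neg_zero, integral_symm, neg_neg]

section Truncation

variable {m : ℝ}

theorem continuous_Tk (m : ℝ) : Continuous (Tk m) :=
  (continuous_id.min continuous_const).max continuous_const

theorem Tk_odd (hm : 0 ≤ m) : Function.Odd (Tk m) := fun x => by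
  simp only [Tk, max_def, min_def]
  split_ifs <;> linarith

theorem Tk_of_abs_le {x : ℝ} (hx : |x| ≤ m) : Tk m x = x := by
  rw [abs_le] at hx
  rw [Tk, min_eq_left hx.2, max_eq_left hx.1]

theorem Tk_of_le {x : ℝ} (hm : 0 ≤ m) (hx : m ≤ x) : Tk m x = m := by
  rw [Tk, min_eq_right hx, max_eq_left (by linarith)]

theorem Tk_nonneg {x : ℝ} (hx : 0 ≤ x) : 0 ≤ Tk m x := by
  simp only [Tk, max_def, min_def]
  split_ifs <;> linarith

theorem Tk_le_Tk {m' x : ℝ} (hm : 0 ≤ m) (hmm' : m ≤ m') (hx : 0 ≤ x) : Tk m x ≤ Tk m' x := by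
  simp only [Tk, max_def, min_def]
  split_ifs <;> linarith

theorem abs_sub_Tk (hm : 0 ≤ m) (x : ℝ) : |x - Tk m x| = max (|x| - m) 0 := by
  simp only [Tk, max_def, min_def, abs_eq_max_neg]
  split_ifs <;> linarith

theorem neg_sub_Tk (hm : 0 ≤ m) (x : ℝ) : -x - Tk m (-x) = -(x - Tk m x) := by
  rw [Tk_odd hm]
  ring

end Truncation

section Primitive

variable {m : ℝ}

theorem Tkbar_neg (hm : 0 ≤ m) (x : ℝ) : Tkbar m (-x) = Tkbar m x :=
  integral_zero_neg_of_odd (Tk_odd hm) x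

theorem Tkbar_abs (hm : 0 ≤ m) (x : ℝ) : Tkbar m |x| = Tkbar m x := by
  rcases abs_choice x with h | h <;> rw [h]
  exact Tkbar_neg hm x

theorem Tkbar_le_Tkbar_of_le {x y : ℝ} (hx : 0 ≤ x) (hxy : x ≤ y) : Tkbar m x ≤ Tkbar m y :=
  integral_mono_interval le_rfl hx hxy
    (ae_restrict_of_forall_mem measurableSet_Ioc fun _ hτ => Tk_nonneg hτ.1.le)
    ((continuous_Tk m).intervalIntegrable 0 y)

theorem Tkbar_le_Tkbar_of_level_le {m' x : ℝ} (hm : 0 ≤ m) (hmm' : m ≤ m') (hx : 0 ≤ x) :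
    Tkbar m x ≤ Tkbar m' x :=
  integral_mono_on hx ((continuous_Tk m).intervalIntegrable 0 x)
    ((continuous_Tk m').intervalIntegrable 0 x) fun _ hτ => Tk_le_Tk hm hmm' hτ.1

theorem Tkbar_le_Tkbar_of_abs_le {m' x y : ℝ} (hm : 0 ≤ m) (hmm' : m ≤ m') (hxy : |x| ≤ |y|) :
    Tkbar m x ≤ Tkbar m' y := by
  rw [← Tkbar_abs hm x, ← Tkbar_abs (hm.trans hmm') y]
  exact (Tkbar_le_Tkbar_of_level_le hm hmm' (abs_nonneg x)).trans
    (Tkbar_le_Tkbar_of_le (abs_nonneg x) hxy)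

end Primitive

section Shrinkage

variable {k ℓ : ℝ}

theorem Jfun_odd (hk : 0 ≤ k) (hkℓ : k ≤ ℓ) : Function.Odd (Jfun k ℓ) := fun x => by
  rw [Jfun, Jfun, neg_sub_Tk hk, Tk_odd (sub_nonneg.2 hkℓ)]

theorem Jfun_of_abs_le {τ : ℝ} (hkℓ : k ≤ ℓ) (hτ : |τ| ≤ k) : Jfun k ℓ τ = 0 := by
  rw [Jfun, Tk_of_abs_le hτ, sub_self, Tk_of_abs_le (by simpa using sub_nonneg.2 hkℓ)]

theorem Jfun_of_le {τ : ℝ} (hk : 0 ≤ k) (hτ : k ≤ τ) : Jfun k ℓ τ = Tk (ℓ - k) (τ - k) := by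
  rw [Jfun, Tk_of_le hk hτ]

theorem Jbar_eq_zero {r : ℝ} (hkℓ : k ≤ ℓ) (hr : |r| ≤ k) : Jbar k ℓ r = 0 := by
  rw [Jbar, integral_congr (g := fun _ => 0), intervalIntegral.integral_zero]
  intro τ hτ
  have hτr := abs_sub_left_of_mem_uIcc hτ
  rw [sub_zero, sub_zero] at hτr
  exact Jfun_of_abs_le hkℓ (hτr.trans hr)

theorem Jbar_eq_Tkbar_of_nonneg (hk : 0 ≤ k) (hkℓ : k ≤ ℓ) {r : ℝ} (hr : 0 ≤ r) :
    Jbar k ℓ r = Tkbar (ℓ - k) (r - Tk k r) := by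
  rcases le_total r k with hrk | hkr
  · have hr' : |r| ≤ k := abs_le.2 ⟨by linarith, hrk⟩
    rw [Jbar_eq_zero hkℓ hr', Tk_of_abs_le hr', sub_self, Tkbar, integral_same]
  · have hJint : ∀ a b, IntervalIntegrable (Jfun k ℓ) volume a b := fun a b =>
      ((continuous_Tk _).comp (continuous_id.sub (continuous_Tk k))).intervalIntegrable a b
    have hshift : EqOn (Jfun k ℓ) (fun τ => Tk (ℓ - k) (τ - k)) (uIcc k r) := fun τ hτ =>
      Jfun_of_le hk (uIcc_of_le hkr ▸ hτ).1
    rw [Jbar, ← integral_add_adjacent_intervals (hJint 0 k) (hJint k r), ← Jbar,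
      Jbar_eq_zero hkℓ (abs_of_nonneg hk).le, zero_add, integral_congr hshift,
      integral_comp_sub_right, sub_self, Tk_of_le hk hkr, Tkbar]

theorem Jbar_eq_Tkbar (hk : 0 ≤ k) (hkℓ : k ≤ ℓ) (r : ℝ) :
    Jbar k ℓ r = Tkbar (ℓ - k) (r - Tk k r) := by
  rcases le_total 0 r with hr | hr
  · exact Jbar_eq_Tkbar_of_nonneg hk hkℓ hr
  · obtain ⟨t, rfl⟩ : ∃ t, r = -t := ⟨-r, (neg_neg r).symm⟩
    rw [Jbar, integral_zero_neg_of_odd (Jfun_odd hk hkℓ), ← Jbar,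
      Jbar_eq_Tkbar_of_nonneg hk hkℓ (neg_nonpos.1 hr), neg_sub_Tk hk, Tkbar_neg (sub_nonneg.2 hkℓ)]

end Shrinkage

theorem stmt9_general (k ℓ : ℝ) (hℓ : 2 * k < ℓ) (r s : ℝ) (hs : |s| ≤ k) :
    0 ≤ Tkbar (ℓ + k) (r - s) - Jbar k ℓ r := by
  have hk : 0 ≤ k := (abs_nonneg s).trans hs
  rw [Jbar_eq_Tkbar hk (by linarith), sub_nonneg]
  refine Tkbar_le_Tkbar_of_abs_le (by linarith) (by linarith) ?_
  rw [abs_sub_Tk hk]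
  exact max_le (by linarith [abs_sub_abs_le_abs_sub r s]) (abs_nonneg _)

/-- For `0 < 2k < ℓ` and all `r, s ∈ ℝ` with `|s| ≤ k`:
`T̄_{ℓ+k}(r - s) - J̄(r) ≥ 0`. -/
theorem stmt9 (k ℓ : ℝ) (hk : 0 < k) (hℓ : 2 * k < ℓ) (r s : ℝ) (hs : |s| ≤ k) :
    0 ≤ Tkbar (ℓ + k) (r - s) - Jbar k ℓ r :=
  stmt9_general k ℓ hℓ r s hs
end

section
/- Let k, ℓ > 0 with ℓ > 2k. Define T_k(r) = max{min{r, k}, −k}, T̄_k(r) = ∫₀^r T_k(τ) dτ, J(r) = T_{ℓ−k}(r − T_k(r)) and J̄(r) = ∫₀^r J(τ) dτ. Then for all r ∈ ℝ, |T̄_{ℓ+k}(r − T_k(r)) − J̄(r)| ≤ 2k|r|·χ_{{|r| ≥ ℓ}}(r); in particular the left-hand side vanishes for |r| < ℓ. -/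
open MeasureTheory

lemma tk_cont (k : ℝ) : Continuous (Tk k) :=
  (continuous_id.min continuous_const).max continuous_const

lemma tk_eq_self {k r : ℝ} (h1 : -k ≤ r) (h2 : r ≤ k) : Tk k r = r := by
  unfold Tk; rw [min_eq_left h2, max_eq_left h1]

lemma tk_eq_of_le {k r : ℝ} (hk : 0 ≤ k) (h : k ≤ r) : Tk k r = k := by
  unfold Tk; rw [min_eq_right h, max_eq_left (by linarith)]

lemma tk_eq_neg {k r : ℝ} (hk : 0 ≤ k) (h : r ≤ -k) : Tk k r = -k := by
  unfold Tk; rw [min_eq_left (by linarith), max_eq_right h]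

lemma tk_neg (k : ℝ) (hk : 0 ≤ k) (r : ℝ) : Tk k (-r) = - Tk k r := by
  rcases le_total r (-k) with h | h
  · rw [tk_eq_of_le hk (by linarith), tk_eq_neg hk h, neg_neg]
  rcases le_total k r with h' | h'
  · rw [tk_eq_neg hk (by linarith), tk_eq_of_le hk h']
  · rw [tk_eq_self (by linarith) (by linarith), tk_eq_self h h']

lemma primitive_neg {f : ℝ → ℝ} (hf : ∀ x, f (-x) = - f x) (r : ℝ) :
    (∫ τ in (0:ℝ)..(-r), f τ) = ∫ τ in (0:ℝ)..r, f τ := by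
  have h := intervalIntegral.integral_comp_neg (a := (0:ℝ)) (b := r) f
  simp only [neg_zero] at h
  have h2 : (∫ x in (0:ℝ)..r, f (-x)) = ∫ x in (0:ℝ)..r, -f x := by
    congr 1; ext x; exact hf x
  rw [h2, intervalIntegral.integral_neg] at h
  have h3 : (∫ x in (-r:ℝ)..0, f x) = - ∫ x in (0:ℝ)..(-r), f x :=
    (intervalIntegral.integral_symm _ _)
  rw [h3] at h
  linarith

lemma tkbar_small {m s : ℝ} (h0 : 0 ≤ s) (h : s ≤ m) : Tkbar m s = s^2/2 := by
  unfold Tkbar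
  rw [intervalIntegral.integral_congr (g := fun τ => τ)]
  · rw [integral_id]; ring
  · intro x hx
    rw [Set.uIcc_of_le h0] at hx
    exact tk_eq_self (by linarith [hx.1]) (by linarith [hx.2])

lemma tkbar_big {m s : ℝ} (hm : 0 ≤ m) (h : m ≤ s) : Tkbar m s = m*s - m^2/2 := by
  unfold Tkbar
  have hi1 : IntervalIntegrable (Tk m) volume 0 m := (tk_cont m).intervalIntegrable _ _
  have hi2 : IntervalIntegrable (Tk m) volume m s := (tk_cont m).intervalIntegrable _ _
  rw [← intervalIntegral.integral_add_adjacent_intervals hi1 hi2]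
  have e1 : (∫ τ in (0:ℝ)..m, Tk m τ) = m^2/2 := tkbar_small hm le_rfl
  have e2 : (∫ τ in (m:ℝ)..s, Tk m τ) = (s - m) * m := by
    rw [intervalIntegral.integral_congr (g := fun _ => m)]
    · simp [intervalIntegral.integral_const]
    · intro x hx
      rw [Set.uIcc_of_le h] at hx
      exact tk_eq_of_le hm hx.1
  rw [e1, e2]; ring

section jbar
variable {k ℓ : ℝ} (hk : 0 < k) (hℓ : 2 * k < ℓ)

lemma jfun_cont : Continuous (Jfun k ℓ) :=
  (tk_cont _).comp (continuous_id.sub (tk_cont k))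

include hk hℓ

lemma jfun_zero {r : ℝ} (h1 : -k ≤ r) (h2 : r ≤ k) : Jfun k ℓ r = 0 := by
  unfold Jfun
  rw [tk_eq_self h1 h2, sub_self]
  exact tk_eq_self (by linarith) (by linarith)

lemma jfun_mid {r : ℝ} (h1 : k ≤ r) (h2 : r ≤ ℓ) : Jfun k ℓ r = r - k := by
  unfold Jfun
  rw [tk_eq_of_le hk.le h1]
  exact tk_eq_self (by linarith) (by linarith)

lemma jfun_big {r : ℝ} (h1 : ℓ ≤ r) : Jfun k ℓ r = ℓ - k := by
  unfold Jfun
  rw [tk_eq_of_le hk.le (by linarith)]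
  exact tk_eq_of_le (by linarith) (by linarith)

lemma jbar_zero {r : ℝ} (h0 : 0 ≤ r) (h : r ≤ k) : Jbar k ℓ r = 0 := by
  unfold Jbar
  rw [intervalIntegral.integral_congr (g := fun _ => (0:ℝ))]
  · simp
  · intro x hx
    rw [Set.uIcc_of_le h0] at hx
    exact jfun_zero hk hℓ (by linarith [hx.1]) (le_trans hx.2 h)

lemma jbar_mid {r : ℝ} (h1 : k ≤ r) (h2 : r ≤ ℓ) : Jbar k ℓ r = (r-k)^2/2 := by
  unfold Jbar
  have hi1 : IntervalIntegrable (Jfun k ℓ) volume 0 k := jfun_cont.intervalIntegrable _ _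
  have hi2 : IntervalIntegrable (Jfun k ℓ) volume k r := jfun_cont.intervalIntegrable _ _
  rw [← intervalIntegral.integral_add_adjacent_intervals hi1 hi2]
  have e1 : (∫ τ in (0:ℝ)..k, Jfun k ℓ τ) = 0 := jbar_zero hk hℓ hk.le le_rfl
  have e2 : (∫ τ in (k:ℝ)..r, Jfun k ℓ τ) = (r-k)^2/2 := by
    rw [intervalIntegral.integral_congr (g := fun τ => τ - k)]
    · have h := intervalIntegral.integral_comp_sub_right (a := k) (b := r) (fun x : ℝ => x) k
      simp only [sub_self] at h
      rw [h, integral_id]; ring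
    · intro x hx
      rw [Set.uIcc_of_le h1] at hx
      exact jfun_mid hk hℓ hx.1 (le_trans hx.2 h2)
  rw [e1, e2]; ring

lemma jbar_big {r : ℝ} (h1 : ℓ ≤ r) : Jbar k ℓ r = (ℓ-k)*r - (ℓ-k)*(ℓ+k)/2 := by
  unfold Jbar
  have hi1 : IntervalIntegrable (Jfun k ℓ) volume 0 ℓ := jfun_cont.intervalIntegrable _ _
  have hi2 : IntervalIntegrable (Jfun k ℓ) volume ℓ r := jfun_cont.intervalIntegrable _ _
  rw [← intervalIntegral.integral_add_adjacent_intervals hi1 hi2]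
  have e1 : (∫ τ in (0:ℝ)..ℓ, Jfun k ℓ τ) = (ℓ-k)^2/2 := jbar_mid hk hℓ (by linarith) le_rfl
  have e2 : (∫ τ in (ℓ:ℝ)..r, Jfun k ℓ τ) = (r - ℓ) * (ℓ - k) := by
    rw [intervalIntegral.integral_congr (g := fun _ => ℓ - k)]
    · rw [intervalIntegral.integral_const]; rw [smul_eq_mul]
    · intro x hx
      rw [Set.uIcc_of_le h1] at hx
      exact jfun_big hk hℓ hx.1
  rw [e1, e2]; ring

lemma stmt11_nonneg (r : ℝ) (h0 : 0 ≤ r) :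
    |Tkbar (ℓ + k) (r - Tk k r) - Jbar k ℓ r| ≤
      2 * k * |r| * Set.indicator {x : ℝ | ℓ ≤ |x|} (fun _ => (1:ℝ)) r := by
  have hrabs : |r| = r := abs_of_nonneg h0
  rcases lt_or_ge r ℓ with hrl | hrl
  · -- |r| < ℓ : LHS = 0
    have hind : Set.indicator {x : ℝ | ℓ ≤ |x|} (fun _ => (1:ℝ)) r = 0 := by
      apply Set.indicator_of_notMem
      simp only [Set.mem_setOf_eq, hrabs]; linarith
    rw [hind, mul_zero]
    rcases le_total r k with hrk | hrk
    · rw [tk_eq_self (by linarith) hrk, sub_self, tkbar_small le_rfl (by linarith),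
        jbar_zero hk hℓ h0 hrk]
      simp
    · rw [tk_eq_of_le hk.le hrk, tkbar_small (by linarith) (by linarith),
        jbar_mid hk hℓ hrk hrl.le]
      simp
  · -- ℓ ≤ r
    have hind : Set.indicator {x : ℝ | ℓ ≤ |x|} (fun _ => (1:ℝ)) r = 1 := by
      apply Set.indicator_of_mem
      simp only [Set.mem_setOf_eq, hrabs]; linarith
    rw [hind, mul_one, hrabs, tk_eq_of_le hk.le (by linarith),
      jbar_big hk hℓ hrl]
    rcases le_total r (ℓ + 2*k) with hr2 | hr2
    · rw [tkbar_small (by linarith) (by linarith)]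
      rw [abs_le]
      constructor <;> nlinarith
    · rw [tkbar_big (by linarith) (by linarith)]
      rw [abs_le]
      constructor <;> nlinarith

end jbar

/-- For `0 < 2k < ℓ` and every `r ∈ ℝ`:
`|T̄_{ℓ+k}(r - T_k(r)) - J̄(r)| ≤ 2k |r| χ_{{|r| ≥ ℓ}}(r)`;
in particular the left-hand side vanishes for `|r| < ℓ`. -/
theorem stmt11 (k ℓ : ℝ) (hk : 0 < k) (hℓ : 2 * k < ℓ) (r : ℝ) :
    |Tkbar (ℓ + k) (r - Tk k r) - Jbar k ℓ r| ≤
      2 * k * |r| * Set.indicator {x : ℝ | ℓ ≤ |x|} (fun _ => (1:ℝ)) r := by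
  rcases le_total 0 r with h0 | h0
  · exact stmt11_nonneg hk hℓ r h0
  · have h1 := stmt11_nonneg hk hℓ (-r) (by linarith)
    have e1 : (-r) - Tk k (-r) = -(r - Tk k r) := by rw [tk_neg k hk.le]; ring
    have e2 : Tkbar (ℓ + k) (-(r - Tk k r)) = Tkbar (ℓ + k) (r - Tk k r) :=
      primitive_neg (tk_neg _ (by linarith)) _
    have e3 : Jbar k ℓ (-r) = Jbar k ℓ r := by
      apply primitive_neg
      intro x
      unfold Jfun
      rw [tk_neg k hk.le, show -x - -Tk k x = -(x - Tk k x) by ring, tk_neg _ (by linarith)]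
    have e4 : |(-r)| = |r| := abs_neg r
    have e5 : Set.indicator {x : ℝ | ℓ ≤ |x|} (fun _ => (1:ℝ)) (-r)
        = Set.indicator {x : ℝ | ℓ ≤ |x|} (fun _ => (1:ℝ)) r := by
      rcases le_or_gt ℓ |r| with h | h
      · rw [Set.indicator_of_mem (by simpa [e4] using h),
          Set.indicator_of_mem (by simpa using h)]
      · rw [Set.indicator_of_notMem (by simp [e4]; linarith),
          Set.indicator_of_notMem (by simp; linarith)]
    rw [e1, e2, e3, e4, e5] at h1
    exact h1
end

section
/- Let (X, μ) be a measure space, f, g : X → [0, ∞] measurable, p ≥ 1, a > 0, θ ∈ (0, 1], and M₁, M ≥ 0. Assume that for every k ≥ 1: μ({f > k}) ≤ M₁ k^{−a} and ∫_{{f ≤ k}} g^p dμ ≤ M k. Then for every k ≥ 1: μ({g > k}) ≤ M₁ k^{−aθ} + M k^{θ−p}. -/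
open MeasureTheory
open scoped ENNReal

/-- Let `(X, μ)` be a measure space, `f, g : X → [0, ∞]` measurable,
`p ≥ 1`, `a > 0`, `θ ∈ (0, 1]`, `M₁, M ≥ 0`. If for every real `k ≥ 1` one has
`μ({f > k}) ≤ M₁ k^{-a}` and `∫_{f ≤ k} g^p dμ ≤ M k`, then for every `k ≥ 1`
`μ({g > k}) ≤ M₁ k^{-aθ} + M k^{θ-p}`. -/
theorem stmt12 {X : Type*} [MeasurableSpace X] (μ : Measure X)
    (f g : X → ℝ≥0∞) (hf : Measurable f) (hg : Measurable g)
    (p a θ M₁ M : ℝ) (hp : 1 ≤ p) (ha : 0 < a) (hθ0 : 0 < θ) (hθ1 : θ ≤ 1)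
    (hM₁ : 0 ≤ M₁) (hM : 0 ≤ M)
    (hfk : ∀ k : ℝ, 1 ≤ k →
      μ {x | ENNReal.ofReal k < f x} ≤ ENNReal.ofReal (M₁ * k ^ (-a)))
    (hgk : ∀ k : ℝ, 1 ≤ k →
      ∫⁻ x in {x | f x ≤ ENNReal.ofReal k}, g x ^ p ∂μ ≤ ENNReal.ofReal (M * k)) :
    ∀ k : ℝ, 1 ≤ k →
      μ {x | ENNReal.ofReal k < g x} ≤
        ENNReal.ofReal (M₁ * k ^ (-(a * θ))) + ENNReal.ofReal (M * k ^ (θ - p)) := by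
  intro k hk
  have hk0 : (0:ℝ) < k := lt_of_lt_of_le one_pos hk
  have hkθ : (1:ℝ) ≤ k ^ θ := Real.one_le_rpow hk hθ0.le
  set K := ENNReal.ofReal (k ^ θ) with hK
  have hsplit : {x | ENNReal.ofReal k < g x} ⊆
      {x | K < f x} ∪ ({x | ENNReal.ofReal k < g x} ∩ {x | f x ≤ K}) := by
    intro x hx
    by_cases h : f x ≤ K
    · exact Or.inr ⟨hx, h⟩
    · exact Or.inl (lt_of_not_ge h)
  refine le_trans (measure_mono hsplit) (le_trans (measure_union_le _ _) ?_)
  gcongr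
  · -- decay piece
    rw [show (-(a * θ)) = θ * (-a) by ring, Real.rpow_mul hk0.le]
    exact hfk _ hkθ
  · -- Chebyshev piece
    have hmeas : MeasurableSet {x | ENNReal.ofReal k < g x} :=
      measurableSet_lt measurable_const hg
    rw [← Measure.restrict_apply hmeas]
    set ν := μ.restrict {x | f x ≤ K}
    have hε0 : (1:ℝ≥0∞) ≤ ENNReal.ofReal k := by
      simpa using ENNReal.ofReal_le_ofReal hk
    have hεp : ENNReal.ofReal k ^ p ≠ 0 := by
      apply ne_of_gt
      calc (0:ℝ≥0∞) < 1 := one_pos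
        _ = (1:ℝ≥0∞) ^ p := (ENNReal.one_rpow p).symm
        _ ≤ ENNReal.ofReal k ^ p := ENNReal.rpow_le_rpow hε0 (by linarith)
    have hεtop : ENNReal.ofReal k ^ p ≠ ⊤ :=
      ENNReal.rpow_ne_top_of_nonneg (by linarith) ENNReal.ofReal_ne_top
    have hsub : {x | ENNReal.ofReal k < g x} ⊆
        {x | ENNReal.ofReal k ^ p ≤ g x ^ p} := fun x hx =>
      ENNReal.rpow_le_rpow hx.le (by linarith)
    have hcheb : ENNReal.ofReal k ^ p * ν {x | ENNReal.ofReal k < g x} ≤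
        ∫⁻ x, g x ^ p ∂ν := by
      calc ENNReal.ofReal k ^ p * ν {x | ENNReal.ofReal k < g x}
          ≤ ENNReal.ofReal k ^ p * ν {x | ENNReal.ofReal k ^ p ≤ g x ^ p} :=
            mul_le_mul_right (measure_mono hsub) _
        _ ≤ ∫⁻ x, g x ^ p ∂ν :=
            mul_meas_ge_le_lintegral₀ ((ENNReal.continuous_rpow_const.measurable.comp hg).aemeasurable) _
    have hint : ∫⁻ x, g x ^ p ∂ν ≤ ENNReal.ofReal (M * k ^ θ) := hgk _ hkθ
    have : ν {x | ENNReal.ofReal k < g x} ≤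
        ENNReal.ofReal (M * k ^ θ) / (ENNReal.ofReal k ^ p) := by
      rw [ENNReal.le_div_iff_mul_le (Or.inl hεp) (Or.inl hεtop), mul_comm]
      exact le_trans hcheb hint
    refine this.trans (le_of_eq ?_)
    rw [ENNReal.ofReal_rpow_of_pos hk0, ← ENNReal.ofReal_div_of_pos
      (Real.rpow_pos_of_pos hk0 p)]
    congr 1
    rw [Real.rpow_sub hk0]
    ring
end

section
/- Let (X, μ) be a finite measure space and u_n : X → ℝ measurable functions. Define T_k(r) = max{min{r, k}, −k}. Assume: (a) there exists c > 0 such that μ({|u_n| > k}) ≤ c/k for every n and every k ≥ 1; (b) for every k > 0, the sequence {T_k(u_n)} is Cauchy in measure. Then {u_n} is Cauchy in measure, and consequently there exist a subsequence {u_{n_j}} and a measurable function u such that u_{n_j} → u μ-a.e. -/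
open MeasureTheory Filter Topology
open scoped ENNReal NNReal

lemma Tk_eq_self {k r : ℝ} (h : |r| ≤ k) : Tk k r = r := by
  rw [abs_le] at h
  rw [Tk, min_eq_left h.2, max_eq_left h.1]

/-- Let `(X, μ)` be a finite measure space and `uₙ` measurable.
Assume (a) `μ({|uₙ| > k}) ≤ c/k` for all `n` and `k ≥ 1`, and (b) for every `k > 0`
the sequence `{T_k(uₙ)}` is Cauchy in measure. Then `{uₙ}` is Cauchy in measure and,
consequently, a subsequence of `{uₙ}` converges μ-a.e. to a measurable function `u`. -/
theorem stmt17 {X : Type*} [MeasurableSpace X] (μ : Measure X) [IsFiniteMeasure μ]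
    (u : ℕ → X → ℝ) (hu : ∀ n, Measurable (u n))
    (c : ℝ) (hc : 0 < c)
    (ha : ∀ n, ∀ k : ℝ, 1 ≤ k → μ {x | k < |u n x|} ≤ ENNReal.ofReal (c / k))
    (hb : ∀ k : ℝ, 0 < k → ∀ σ : ℝ, 0 < σ →
      Tendsto (fun q : ℕ × ℕ =>
          μ {x | σ < |Tk k (u q.1 x) - Tk k (u q.2 x)|})
        atTop (𝓝 0)) :
    (∀ σ : ℝ, 0 < σ →
      Tendsto (fun q : ℕ × ℕ => μ {x | σ < |u q.1 x - u q.2 x|}) atTop (𝓝 0)) ∧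
    ∃ φ : ℕ → ℕ, StrictMono φ ∧ ∃ v : X → ℝ, Measurable v ∧
      ∀ᵐ x ∂μ, Tendsto (fun j => u (φ j) x) atTop (𝓝 (v x)) := by
  have key : ∀ σ : ℝ, 0 < σ →
      Tendsto (fun q : ℕ × ℕ => μ {x | σ < |u q.1 x - u q.2 x|}) atTop (𝓝 0) := by
    intro σ hσ
    rw [ENNReal.tendsto_atTop_zero]
    intro ε hε
    set η : ℝ≥0∞ := min (ε / 3) 1 with hηdef
    have hη0 : 0 < η := lt_min (ENNReal.div_pos hε.ne' (by norm_num)) one_pos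
    have hηtop : η ≠ ∞ := ne_top_of_le_ne_top ENNReal.one_ne_top (min_le_right _ _)
    have hηr : 0 < η.toReal := ENNReal.toReal_pos hη0.ne' hηtop
    set k : ℝ := max 1 (c / η.toReal) with hkdef
    have hk1 : (1 : ℝ) ≤ k := le_max_left _ _
    have hk0 : (0 : ℝ) < k := lt_of_lt_of_le one_pos hk1
    have hck : ENNReal.ofReal (c / k) ≤ η := by
      have h1 : c / k ≤ η.toReal := by
        rw [div_le_iff₀ hk0, mul_comm]
        calc c = (c / η.toReal) * η.toReal := by field_simp
        _ ≤ k * η.toReal :=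
            mul_le_mul_of_nonneg_right (le_max_right _ _) hηr.le
      calc ENNReal.ofReal (c / k) ≤ ENNReal.ofReal η.toReal :=
            ENNReal.ofReal_le_ofReal h1
        _ = η := ENNReal.ofReal_toReal hηtop
    obtain ⟨Q, hQ⟩ := ENNReal.tendsto_atTop_zero.mp (hb k hk0 σ hσ) η hη0
    refine ⟨Q, fun q hq => ?_⟩
    have hsub : {x | σ < |u q.1 x - u q.2 x|} ⊆
        {x | k < |u q.1 x|} ∪ ({x | k < |u q.2 x|} ∪
          {x | σ < |Tk k (u q.1 x) - Tk k (u q.2 x)|}) := by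
      intro x hx
      rcases le_or_gt (|u q.1 x|) k with h1 | h1
      · rcases le_or_gt (|u q.2 x|) k with h2 | h2
        · right; right
          simpa [Set.mem_setOf_eq, Tk_eq_self h1, Tk_eq_self h2] using hx
        · right; left; exact h2
      · left; exact h1
    calc μ {x | σ < |u q.1 x - u q.2 x|}
        ≤ μ ({x | k < |u q.1 x|} ∪ ({x | k < |u q.2 x|} ∪
            {x | σ < |Tk k (u q.1 x) - Tk k (u q.2 x)|})) := measure_mono hsub
      _ ≤ μ {x | k < |u q.1 x|} + (μ {x | k < |u q.2 x|} +
            μ {x | σ < |Tk k (u q.1 x) - Tk k (u q.2 x)|}) :=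
          (measure_union_le _ _).trans
            (add_le_add le_rfl (measure_union_le _ _))
      _ ≤ η + (η + η) := by
          refine add_le_add ((ha q.1 k hk1).trans hck)
            (add_le_add ((ha q.2 k hk1).trans hck) (hQ q hq))
      _ ≤ ε / 3 + (ε / 3 + ε / 3) := by
          have := min_le_left (ε / 3) (1 : ℝ≥0∞)
          exact add_le_add this (add_le_add this this)
      _ = ε := by rw [← add_assoc, ENNReal.add_thirds]
  refine ⟨key, ?_⟩
  -- extract a rapidly Cauchy subsequence
  have H : ∀ j : ℕ, ∃ N : ℕ, ∀ p, N ≤ p → ∀ q, N ≤ q →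
      μ {x | (1 / 2 : ℝ) ^ j < |u p x - u q x|} ≤ ENNReal.ofReal ((1 / 2 : ℝ) ^ j) := by
    intro j
    obtain ⟨Q, hQ⟩ := ENNReal.tendsto_atTop_zero.mp
      (key ((1 / 2 : ℝ) ^ j) (by positivity))
      (ENNReal.ofReal ((1 / 2 : ℝ) ^ j)) (ENNReal.ofReal_pos.2 (by positivity))
    exact ⟨max Q.1 Q.2, fun p hp q hq =>
      hQ (p, q) ⟨le_trans (le_max_left _ _) hp, le_trans (le_max_right _ _) hq⟩⟩
  choose N hN using H
  set φ : ℕ → ℕ := fun j => Nat.rec (N 0) (fun j ih => max (N (j + 1)) ih + 1) j with hφdef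
  have hφsucc : ∀ j, φ (j + 1) = max (N (j + 1)) (φ j) + 1 := fun j => rfl
  have hmono : StrictMono φ := strictMono_nat_of_lt_succ (fun n => by
    rw [hφsucc]
    exact lt_of_le_of_lt (le_max_right _ _) (Nat.lt_succ_self _))
  have hφN : ∀ j, N j ≤ φ j := by
    intro j
    cases j with
    | zero => exact le_rfl
    | succ j => rw [hφsucc]; exact le_trans (le_max_left _ _) (Nat.le_succ _)
  set E : ℕ → Set X := fun j =>
    {x | (1 / 2 : ℝ) ^ j < |u (φ (j + 1)) x - u (φ j) x|} with hEdef
  have hE : ∀ j, μ (E j) ≤ ENNReal.ofReal ((1 / 2 : ℝ) ^ j) := fun j =>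
    hN j (φ (j + 1)) (le_trans (hφN j) (hmono.monotone (Nat.le_succ j))) (φ j) (hφN j)
  have htsum : (∑' j, μ (E j)) ≠ ∞ := by
    refine ne_top_of_le_ne_top ?_ (ENNReal.tsum_le_tsum hE)
    rw [← ENNReal.ofReal_tsum_of_nonneg (fun n => by positivity) summable_geometric_two]
    exact ENNReal.ofReal_ne_top
  have hBC : ∀ᵐ x ∂μ, ∀ᶠ j in atTop, x ∉ E j := MeasureTheory.ae_eventually_notMem htsum
  have hae : ∀ᵐ x ∂μ, ∃ l : ℝ, Tendsto (fun j => u (φ j) x) atTop (𝓝 l) := by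
    filter_upwards [hBC] with x hx
    obtain ⟨J, hJ⟩ := eventually_atTop.mp hx
    set d : ℕ → ℝ := fun n => (1 / 2 : ℝ) ^ n +
      (if n < J then dist (u (φ n) x) (u (φ (n + 1)) x) else 0) with hddef
    have hdist : ∀ n, dist (u (φ n) x) (u (φ (n + 1)) x) ≤ d n := by
      intro n
      rw [hddef]
      by_cases h : n < J
      · simp only [if_pos h]
        nlinarith [pow_pos (by norm_num : (0:ℝ) < 1/2) n]
      · simp only [if_neg h, add_zero]
        have hxn : x ∉ E n := hJ n (le_of_not_gt h)
        rw [hEdef] at hxn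
        simp only [Set.mem_setOf_eq, not_lt] at hxn
        rw [dist_comm, Real.dist_eq]
        exact hxn
    have hd : Summable d := by
      refine Summable.add summable_geometric_two ?_
      refine summable_of_ne_finset_zero (s := Finset.range J) ?_
      intro n hn
      simp only [Finset.mem_range, not_lt] at hn
      simp [Nat.not_lt.mpr hn]
    have hCauchy : CauchySeq (fun j => u (φ j) x) :=
      cauchySeq_of_dist_le_of_summable d hdist hd
    exact cauchySeq_tendsto_of_complete hCauchy
  obtain ⟨v, hv, hvt⟩ := measurable_limit_of_tendsto_metrizable_ae
    (fun j => (hu (φ j)).aemeasurable) hae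
  exact ⟨φ, hmono, v, hv, hvt⟩
end
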